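/- (Marginally trapped developable meridian surfaces of parabolic type.) Take f(u) = u on an open interval I ⊂ (0,∞) and g(u) = au + b with constants a < 0 and b (so κ_m ≡ 0 and the surface is a developable ruled surface, a cone). Then the meridian surface of parabolic type is marginally trapped, i.e. ⟨H(u,v),H(u,v)⟩ = 0 for all (u,v) ∈ I × J, if and only if κ̄(v)² = −1/(2a) for all v ∈ J. -/

import Mathlib

/-!
In the frame `(e₁, e₂, ξ₁, ξ₂)` the surface is `z = f·P(v) + g·ξ₁`. For `f = u`, `g = au + b` the
`u`-lines are straight, so `z_uu = 0` and only the `v`-part of `H` survives: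
`⟨z_vv, n₁⟩/G = κ̄/u` and `⟨z_vv, n₂⟩/G = −√(−1/(2a))/u`. As `n₁` is unit spacelike, `n₂` unit
timelike and the two are orthogonal, `⟨H, H⟩ = (κ̄² + 1/(2a))/(4u²)`, which vanishes iff `κ̄² = −1/(2a)`.
-/

namespace MeridianParabolic

noncomputable section

/-- The Minkowski inner product of signature (3,1) on `ℝ⁴`:
`⟨x,y⟩ = x₁y₁ + x₂y₂ + x₃y₃ − x₄y₄`. -/
def mink (x y : Fin 4 → ℝ) : ℝ := x 0 * y 0 + x 1 * y 1 + x 2 * y 2 - x 3 * y 3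

/-- The first standard basis vector `e₁`. -/
def e1 : Fin 4 → ℝ := ![1, 0, 0, 0]

/-- The second standard basis vector `e₂`. -/
def e2 : Fin 4 → ℝ := ![0, 1, 0, 0]

/-- The lightlike vector `ξ₁ = (e₃ + e₄)/√2`. -/
def xi1 : Fin 4 → ℝ := ![0, 0, 1 / Real.sqrt 2, 1 / Real.sqrt 2]

/-- The lightlike vector `ξ₂ = (−e₃ + e₄)/√2`. -/
def xi2 : Fin 4 → ℝ := ![0, 0, -(1 / Real.sqrt 2), 1 / Real.sqrt 2]

/-- The meridian surface of parabolic type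
`z(u,v) = fφ cos v · e₁ + fφ sin v · e₂ + (fφ²/2 + g) ξ₁ + f ξ₂`. -/
def z (f g φ : ℝ → ℝ) (u v : ℝ) : Fin 4 → ℝ :=
  (f u * φ v * Real.cos v) • e1 + (f u * φ v * Real.sin v) • e2 +
    (f u * (φ v) ^ 2 / 2 + g u) • xi1 + f u • xi2

/-- The partial derivative `z_u`. -/
def zu (f g φ : ℝ → ℝ) (u v : ℝ) : Fin 4 → ℝ := deriv (fun t => z f g φ t v) u

/-- The partial derivative `z_v`. -/
def zv (f g φ : ℝ → ℝ) (u v : ℝ) : Fin 4 → ℝ := deriv (fun t => z f g φ u t) v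

/-- The second partial derivative `z_uu`. -/
def zuu (f g φ : ℝ → ℝ) (u v : ℝ) : Fin 4 → ℝ := deriv (fun t => zu f g φ t v) u

/-- The second partial derivative `z_uv`. -/
def zuv (f g φ : ℝ → ℝ) (u v : ℝ) : Fin 4 → ℝ := deriv (fun t => zu f g φ u t) v

/-- The second partial derivative `z_vv`. -/
def zvv (f g φ : ℝ → ℝ) (u v : ℝ) : Fin 4 → ℝ := deriv (fun t => zv f g φ u t) v

/-- The normal field `n₁ = ((φ̇ sin v + φ cos v) e₁ + (−φ̇ cos v + φ sin v) e₂ + φ² ξ₁)/√(φ̇² + φ²)`. -/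
def n1 (φ : ℝ → ℝ) (v : ℝ) : Fin 4 → ℝ :=
  (Real.sqrt ((deriv φ v) ^ 2 + (φ v) ^ 2))⁻¹ •
    ((deriv φ v * Real.sin v + φ v * Real.cos v) • e1 +
      (-(deriv φ v) * Real.cos v + φ v * Real.sin v) • e2 + (φ v) ^ 2 • xi1)

/-- The normal field `n₂ = √(−f'/(2g')) (φ cos v e₁ + φ sin v e₂ + ((f'φ² − 2g')/(2f')) ξ₁ + ξ₂)`. -/
def n2 (f g φ : ℝ → ℝ) (u v : ℝ) : Fin 4 → ℝ :=
  Real.sqrt (-(deriv f u) / (2 * deriv g u)) •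
    ((φ v * Real.cos v) • e1 + (φ v * Real.sin v) • e2 +
      ((deriv f u * (φ v) ^ 2 - 2 * deriv g u) / (2 * deriv f u)) • xi1 + xi2)

/-- The curvature `κ_m(u) = (f'g'' − g'f'')/(−2f'g')^{3/2}` of the meridians. -/
def kappam (f g : ℝ → ℝ) (u : ℝ) : ℝ :=
  (deriv f u * deriv (deriv g) u - deriv g u * deriv (deriv f) u) /
    (-2 * deriv f u * deriv g u) ^ ((3 : ℝ) / 2)

/-- The curvature `κ̄(v) = (φφ̈ − 2φ̇² − φ²)/(φ̇² + φ²)^{3/2}`. -/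
def kappabar (φ : ℝ → ℝ) (v : ℝ) : ℝ :=
  (φ v * deriv (deriv φ) v - 2 * (deriv φ v) ^ 2 - (φ v) ^ 2) /
    ((deriv φ v) ^ 2 + (φ v) ^ 2) ^ ((3 : ℝ) / 2)

/-- The mean curvature vector
`H = (1/2)(⟨z_uu,n₁⟩/E + ⟨z_vv,n₁⟩/G) n₁ − (1/2)(⟨z_uu,n₂⟩/E + ⟨z_vv,n₂⟩/G) n₂`,
where `E = ⟨z_u,z_u⟩` and `G = ⟨z_v,z_v⟩`. -/
def Hvec (f g φ : ℝ → ℝ) (u v : ℝ) : Fin 4 → ℝ :=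
  (1 / 2 * (mink (zuu f g φ u v) (n1 φ v) / mink (zu f g φ u v) (zu f g φ u v) +
      mink (zvv f g φ u v) (n1 φ v) / mink (zv f g φ u v) (zv f g φ u v))) • n1 φ v -
  (1 / 2 * (mink (zuu f g φ u v) (n2 f g φ u v) / mink (zu f g φ u v) (zu f g φ u v) +
      mink (zvv f g φ u v) (n2 f g φ u v) / mink (zv f g φ u v) (zv f g φ u v))) • n2 f g φ u v

open Real Filter Topology

/-- Coordinates with respect to the frame `(e₁, e₂, ξ₁, ξ₂)`; the surface `z` is by definition
such a combination, so its derivatives and inner products are computed coefficientwise. -/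
def nullFrame (c₁ c₂ c₃ c₄ : ℝ) : Fin 4 → ℝ := c₁ • e1 + c₂ • e2 + c₃ • xi1 + c₄ • xi2

lemma mink_nullFrame (x₁ x₂ x₃ x₄ y₁ y₂ y₃ y₄ : ℝ) :
    mink (nullFrame x₁ x₂ x₃ x₄) (nullFrame y₁ y₂ y₃ y₄) =
      x₁ * y₁ + x₂ * y₂ - x₃ * y₄ - x₄ * y₃ := by
  have h2 : √2 ^ 2 = 2 := sq_sqrt zero_le_two
  simp only [mink, nullFrame, e1, e2, xi1, xi2, Pi.add_apply, Pi.smul_apply, smul_eq_mul,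
    Matrix.cons_val_zero, Matrix.cons_val_one, Matrix.cons_val_two, Matrix.cons_val_three,
    Matrix.head_cons, Matrix.tail_cons]
  field_simp
  linear_combination (x₃ * y₄ + x₄ * y₃) * h2

lemma mink_smul_left (c : ℝ) (x y : Fin 4 → ℝ) : mink (c • x) y = c * mink x y := by
  simp only [mink, Pi.smul_apply, smul_eq_mul]; ring

lemma mink_smul_right (c : ℝ) (x y : Fin 4 → ℝ) : mink x (c • y) = c * mink x y := by
  simp only [mink, Pi.smul_apply, smul_eq_mul]; ring

lemma mink_smul_sub_smul_self {A B : Fin 4 → ℝ} (hA : mink A A = 1) (hAB : mink A B = 0)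
    (hB : mink B B = -1) (x y : ℝ) :
    mink (x • A - y • B) (x • A - y • B) = x ^ 2 - y ^ 2 := by
  have hBA : mink B A = 0 := by rw [← hAB]; simp only [mink]; ring
  simp only [mink, Pi.sub_apply, Pi.smul_apply, smul_eq_mul] at hA hAB hBA hB ⊢
  linear_combination x ^ 2 * hA - 2 * x * y * hAB + y ^ 2 * hB

lemma hasDerivAt_nullFrame {c₁ c₂ c₃ c₄ : ℝ → ℝ} {d₁ d₂ d₃ d₄ t : ℝ}
    (h₁ : HasDerivAt c₁ d₁ t) (h₂ : HasDerivAt c₂ d₂ t) (h₃ : HasDerivAt c₃ d₃ t)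
    (h₄ : HasDerivAt c₄ d₄ t) :
    HasDerivAt (fun s => nullFrame (c₁ s) (c₂ s) (c₃ s) (c₄ s)) (nullFrame d₁ d₂ d₃ d₄) t :=
  (((h₁.smul_const e1).add (h₂.smul_const e2)).add (h₃.smul_const xi1)).add (h₄.smul_const xi2)

section Surface

variable {f g φ : ℝ → ℝ} {u v : ℝ}

lemma zu_eq {f₁ g₁ : ℝ} (hf : HasDerivAt f f₁ u) (hg : HasDerivAt g g₁ u) :
    zu f g φ u v =
      nullFrame (f₁ * φ v * cos v) (f₁ * φ v * sin v) (f₁ * φ v ^ 2 / 2 + g₁) f₁ :=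
  (hasDerivAt_nullFrame ((hf.mul_const _).mul_const _) ((hf.mul_const _).mul_const _)
    (((hf.mul_const _).div_const 2).add hg) hf).deriv

lemma zuu_eq {f₁ g₁ : ℝ → ℝ} {f₂ g₂ : ℝ} (hf : ∀ t, HasDerivAt f (f₁ t) t)
    (hg : ∀ t, HasDerivAt g (g₁ t) t) (hf₁ : HasDerivAt f₁ f₂ u) (hg₁ : HasDerivAt g₁ g₂ u) :
    zuu f g φ u v =
      nullFrame (f₂ * φ v * cos v) (f₂ * φ v * sin v) (f₂ * φ v ^ 2 / 2 + g₂) f₂ := by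
  have hzu : (fun t => zu f g φ t v) = fun t => nullFrame (f₁ t * φ v * cos v)
      (f₁ t * φ v * sin v) (f₁ t * φ v ^ 2 / 2 + g₁ t) (f₁ t) :=
    funext fun t => zu_eq (hf t) (hg t)
  rw [zuu, hzu]
  exact (hasDerivAt_nullFrame ((hf₁.mul_const _).mul_const _) ((hf₁.mul_const _).mul_const _)
    (((hf₁.mul_const _).div_const 2).add hg₁) hf₁).deriv

lemma zv_eq {φ₁ : ℝ} (hφ : HasDerivAt φ φ₁ v) :
    zv f g φ u v = nullFrame (f u * (φ₁ * cos v - φ v * sin v))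
      (f u * (φ₁ * sin v + φ v * cos v)) (f u * (φ v * φ₁)) 0 :=
  (hasDerivAt_nullFrame
    (((hφ.const_mul (f u)).mul (hasDerivAt_cos v)).congr_deriv (by ring))
    (((hφ.const_mul (f u)).mul (hasDerivAt_sin v)).congr_deriv (by ring))
    ((((hφ.pow 2).const_mul (f u)).div_const 2).add_const (g u) |>.congr_deriv (by ring))
    (hasDerivAt_const v (f u))).deriv

lemma zvv_eq {φ₁ : ℝ → ℝ} {φ₂ : ℝ} (hφ : ∀ᶠ t in 𝓝 v, HasDerivAt φ (φ₁ t) t)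
    (hφ₁ : HasDerivAt φ₁ φ₂ v) :
    zvv f g φ u v = nullFrame (f u * (φ₂ * cos v - 2 * φ₁ v * sin v - φ v * cos v))
      (f u * (φ₂ * sin v + 2 * φ₁ v * cos v - φ v * sin v))
      (f u * (φ₁ v ^ 2 + φ v * φ₂)) 0 := by
  have hzv : (fun t => zv f g φ u t) =ᶠ[𝓝 v] fun t => nullFrame
      (f u * (φ₁ t * cos t - φ t * sin t)) (f u * (φ₁ t * sin t + φ t * cos t))
      (f u * (φ t * φ₁ t)) 0 :=
    hφ.mono fun t ht => zv_eq ht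
  have hφv := hφ.self_of_nhds
  rw [zvv, hzv.deriv_eq]
  exact (hasDerivAt_nullFrame
    ((((hφ₁.mul (hasDerivAt_cos v)).sub (hφv.mul (hasDerivAt_sin v))).const_mul (f u)).congr_deriv
      (by ring))
    ((((hφ₁.mul (hasDerivAt_sin v)).add (hφv.mul (hasDerivAt_cos v))).const_mul (f u)).congr_deriv
      (by ring))
    (((hφv.mul hφ₁).const_mul (f u)).congr_deriv (by ring))
    (hasDerivAt_const v 0)).deriv

end Surface

section NormalFrame

variable {f g φ : ℝ → ℝ} {u v : ℝ}

lemma n1_eq : n1 φ v = (√(deriv φ v ^ 2 + φ v ^ 2))⁻¹ •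
    nullFrame (deriv φ v * sin v + φ v * cos v) (-deriv φ v * cos v + φ v * sin v) (φ v ^ 2) 0 := by
  simp only [n1, nullFrame, zero_smul, add_zero]

lemma n2_eq : n2 f g φ u v = √(-deriv f u / (2 * deriv g u)) •
    nullFrame (φ v * cos v) (φ v * sin v)
      ((deriv f u * φ v ^ 2 - 2 * deriv g u) / (2 * deriv f u)) 1 := by
  simp only [n2, nullFrame, one_smul]

lemma mink_n1_self (hq : 0 < deriv φ v ^ 2 + φ v ^ 2) : mink (n1 φ v) (n1 φ v) = 1 := by
  have hs : √(deriv φ v ^ 2 + φ v ^ 2) ^ 2 = deriv φ v ^ 2 + φ v ^ 2 := sq_sqrt hq.le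
  have hs0 : √(deriv φ v ^ 2 + φ v ^ 2) ≠ 0 := (sqrt_pos.2 hq).ne'
  rw [n1_eq, mink_smul_left, mink_smul_right, mink_nullFrame]
  field_simp
  linear_combination (deriv φ v ^ 2 + φ v ^ 2) * sin_sq_add_cos_sq v - hs

lemma mink_n1_n2 : mink (n1 φ v) (n2 f g φ u v) = 0 := by
  rw [n1_eq, n2_eq, mink_smul_left, mink_smul_right, mink_nullFrame]
  linear_combination (√(deriv φ v ^ 2 + φ v ^ 2))⁻¹ * √(-deriv f u / (2 * deriv g u)) * φ v ^ 2 *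
    sin_sq_add_cos_sq v

lemma mink_n2_self (h : 0 < -deriv f u / (2 * deriv g u)) :
    mink (n2 f g φ u v) (n2 f g φ u v) = -1 := by
  have hf : deriv f u ≠ 0 := by rintro hf; simp [hf] at h
  have hg : deriv g u ≠ 0 := by rintro hg; simp [hg] at h
  have hm := sq_sqrt h.le
  rw [n2_eq, mink_smul_left, mink_smul_right, mink_nullFrame, ← mul_assoc, ← sq, hm]
  field_simp
  linear_combination -2 * deriv f u * φ v ^ 2 * sin_sq_add_cos_sq v

end NormalFrame

section FundamentalForms

variable {f g φ : ℝ → ℝ} {u v : ℝ}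

lemma mink_zu_self {f₁ g₁ : ℝ} (hf : HasDerivAt f f₁ u) (hg : HasDerivAt g g₁ u) :
    mink (zu f g φ u v) (zu f g φ u v) = -2 * f₁ * g₁ := by
  rw [zu_eq hf hg, mink_nullFrame]
  linear_combination (f₁ * φ v) ^ 2 * sin_sq_add_cos_sq v

lemma mink_zv_self {φ₁ : ℝ} (hφ : HasDerivAt φ φ₁ v) :
    mink (zv f g φ u v) (zv f g φ u v) = f u ^ 2 * (φ₁ ^ 2 + φ v ^ 2) := by
  rw [zv_eq hφ, mink_nullFrame]
  linear_combination f u ^ 2 * (φ₁ ^ 2 + φ v ^ 2) * sin_sq_add_cos_sq v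

variable {φ₂ : ℝ}

lemma mink_zvv_n1 (hφ : ∀ᶠ t in 𝓝 v, HasDerivAt φ (deriv φ t) t)
    (hφ₁ : HasDerivAt (deriv φ) φ₂ v) :
    mink (zvv f g φ u v) (n1 φ v) =
      (√(deriv φ v ^ 2 + φ v ^ 2))⁻¹ * (f u * (φ v * φ₂ - 2 * deriv φ v ^ 2 - φ v ^ 2)) := by
  rw [zvv_eq hφ hφ₁, n1_eq, mink_smul_right, mink_nullFrame]
  linear_combination (√(deriv φ v ^ 2 + φ v ^ 2))⁻¹ * f u *
    (φ v * φ₂ - 2 * deriv φ v ^ 2 - φ v ^ 2) * sin_sq_add_cos_sq v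

lemma mink_zvv_n2 (hφ : ∀ᶠ t in 𝓝 v, HasDerivAt φ (deriv φ t) t)
    (hφ₁ : HasDerivAt (deriv φ) φ₂ v) :
    mink (zvv f g φ u v) (n2 f g φ u v) =
      -(√(-deriv f u / (2 * deriv g u)) * f u * (deriv φ v ^ 2 + φ v ^ 2)) := by
  rw [zvv_eq hφ hφ₁, n2_eq, mink_smul_right, mink_nullFrame]
  linear_combination √(-deriv f u / (2 * deriv g u)) * f u * (φ v * φ₂ - φ v ^ 2) *
    sin_sq_add_cos_sq v

end FundamentalForms

lemma kappabar_sq {φ : ℝ → ℝ} {v : ℝ} (hq : 0 < deriv φ v ^ 2 + φ v ^ 2) :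
    kappabar φ v ^ 2 = (φ v * deriv (deriv φ) v - 2 * deriv φ v ^ 2 - φ v ^ 2) ^ 2 /
      (deriv φ v ^ 2 + φ v ^ 2) ^ 3 := by
  have h32 : ((deriv φ v ^ 2 + φ v ^ 2) ^ ((3 : ℝ) / 2)) ^ 2 = (deriv φ v ^ 2 + φ v ^ 2) ^ 3 := by
    rw [← rpow_natCast, ← rpow_mul hq.le]
    norm_num
  rw [kappabar, div_pow, h32]

lemma mink_Hvec_self_cone {a b : ℝ} (ha : a < 0) {φ : ℝ → ℝ} {u v : ℝ} (hu : u ≠ 0)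
    (hφ : ∀ᶠ t in 𝓝 v, HasDerivAt φ (deriv φ t) t)
    (hφ₁ : HasDerivAt (deriv φ) (deriv (deriv φ) v) v)
    (hq : 0 < deriv φ v ^ 2 + φ v ^ 2) :
    mink (Hvec (fun t => t) (fun t => a * t + b) φ u v)
        (Hvec (fun t => t) (fun t => a * t + b) φ u v) =
      (kappabar φ v ^ 2 + 1 / (2 * a)) / (4 * u ^ 2) := by
  have hf (t : ℝ) : HasDerivAt (fun t => t) 1 t := hasDerivAt_id t
  have hg (t : ℝ) : HasDerivAt (fun t => a * t + b) a t :=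
    (((hasDerivAt_id t).const_mul a).add_const b).congr_deriv (mul_one a)
  have hm : 0 < -deriv (fun t => t) u / (2 * deriv (fun t => a * t + b) u) := by
    rw [(hf u).deriv, (hg u).deriv]
    exact div_pos_of_neg_of_neg (by norm_num) (by linarith)
  have hzuu : zuu (fun t => t) (fun t => a * t + b) φ u v = 0 := by
    rw [zuu_eq hf hg (hasDerivAt_const u 1) (hasDerivAt_const u a)]
    simp [nullFrame]
  have hm2 := sq_sqrt hm.le
  have hs2 := sq_sqrt hq.le
  have hs0 : √(deriv φ v ^ 2 + φ v ^ 2) ≠ 0 := (sqrt_pos.2 hq).ne'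
  rw [Hvec, mink_smul_sub_smul_self (mink_n1_self hq) mink_n1_n2 (mink_n2_self hm),
    mink_zu_self (hf u) (hg u), mink_zv_self hφ.self_of_nhds, mink_zvv_n1 hφ hφ₁,
    mink_zvv_n2 hφ hφ₁, hzuu, kappabar_sq hq]
  rw [(hf u).deriv, (hg u).deriv] at hm2 ⊢
  simp only [mink, Pi.zero_apply, zero_mul, add_zero, sub_zero, zero_div, zero_add]
  field_simp
  rw [neg_div] at hm2
  rw [hs2, hm2]
  field_simp
  ring

lemma _root_.ContDiffOn.eventually_hasDerivAt_deriv {J : Set ℝ} {φ : ℝ → ℝ}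
    (hφ : ContDiffOn ℝ 2 φ J) (hJ : IsOpen J) {v : ℝ} (hv : v ∈ J) :
    ∀ᶠ t in 𝓝 v, HasDerivAt φ (deriv φ t) t := by
  filter_upwards [hJ.mem_nhds hv] with t ht
  exact ((hφ.differentiableOn (by norm_num)).differentiableAt (hJ.mem_nhds ht)).hasDerivAt

lemma _root_.ContDiffOn.hasDerivAt_deriv_deriv {J : Set ℝ} {φ : ℝ → ℝ}
    (hφ : ContDiffOn ℝ 2 φ J) (hJ : IsOpen J) {v : ℝ} (hv : v ∈ J) :
    HasDerivAt (deriv φ) (deriv (deriv φ) v) v :=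
  (((hφ.deriv_of_isOpen hJ (m := 1) (by norm_num)).differentiableOn one_ne_zero).differentiableAt
    (hJ.mem_nhds hv)).hasDerivAt

theorem statement9_general
    (I J : Set ℝ) (hIne : I.Nonempty)
    (hIpos : I ⊆ Set.Ioi (0 : ℝ))
    (hJopen : IsOpen J)
    (a b : ℝ) (ha : a < 0)
    (φ : ℝ → ℝ) (hφ : ContDiffOn ℝ (⊤ : ℕ∞) φ J)
    (hφpos : ∀ v ∈ J, 0 < (deriv φ v) ^ 2 + (φ v) ^ 2) :
    (∀ u ∈ I, ∀ v ∈ J,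
        mink (Hvec (fun t => t) (fun t => a * t + b) φ u v)
          (Hvec (fun t => t) (fun t => a * t + b) φ u v) = 0) ↔
      ∀ v ∈ J, (kappabar φ v) ^ 2 = -1 / (2 * a) := by
  have hφ2 : ContDiffOn ℝ 2 φ J := hφ.of_le (WithTop.coe_le_coe.2 le_top)
  have hH (u : ℝ) (hu : u ∈ I) (v : ℝ) (hv : v ∈ J) :=
    mink_Hvec_self_cone (b := b) ha (Set.mem_Ioi.1 (hIpos hu)).ne'
      (hφ2.eventually_hasDerivAt_deriv hJopen hv) (hφ2.hasDerivAt_deriv_deriv hJopen hv)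
      (hφpos v hv)
  constructor
  · intro hnull v hv
    obtain ⟨u, hu⟩ := hIne
    have h := (hH u hu v hv).symm.trans (hnull u hu v hv)
    have hu2 : 4 * u ^ 2 ≠ 0 := by have := (Set.mem_Ioi.1 (hIpos hu)).ne'; positivity
    rw [div_eq_zero_iff, or_iff_left hu2] at h
    linear_combination h
  · intro hκ u hu v hv
    rw [hH u hu v hv, hκ v hv]
    ring

/-- marginally trapped developable meridian surfaces of parabolic type:
with `f(u) = u` on `I ⊂ (0,∞)` and `g(u) = au + b`, `a < 0` (so `κ_m ≡ 0` and the
surface is a developable ruled surface, a cone), the meridian surface of parabolic type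
is marginally trapped if and only if `κ̄(v)² = −1/(2a)` for all `v ∈ J`. -/
theorem statement9
    (I J : Set ℝ) (hIopen : IsOpen I) (hIconn : IsPreconnected I) (hIne : I.Nonempty)
    (hIpos : I ⊆ Set.Ioi (0 : ℝ))
    (hJopen : IsOpen J) (hJconn : IsPreconnected J)
    (a b : ℝ) (ha : a < 0)
    (φ : ℝ → ℝ) (hφ : ContDiffOn ℝ (⊤ : ℕ∞) φ J)
    (hφpos : ∀ v ∈ J, 0 < (deriv φ v) ^ 2 + (φ v) ^ 2) :
    (∀ u ∈ I, ∀ v ∈ J,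
        mink (Hvec (fun t => t) (fun t => a * t + b) φ u v)
          (Hvec (fun t => t) (fun t => a * t + b) φ u v) = 0) ↔
      ∀ v ∈ J, (kappabar φ v) ^ 2 = -1 / (2 * a) :=
  statement9_general I J hIne hIpos hJopen a b ha φ hφ hφpos

end

end MeridianParabolic
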